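/- Lindenbaum-type extension: if (Γ,Ω) is a consistent pair over a language L(σ′) where σ′ contains infinitely many constants not appearing in any formula of Γ or Ω, then there exists a saturated theory Γ′ over L(σ′) with Γ⊆Γ′ and Ω∩Γ′=∅. -/
import Mathlib


namespace FOFS

/-- A signature: constants, predicate symbols, and arities. -/
structure Signature where
  Const : Type
  Pred : Type
  arity : Pred → ℕ

/-- Terms: variables (indexed by naturals) or constants. -/
inductive Term (C : Type) where
  | var : ℕ → Term C
  | const : C → Term C

namespace Term

def fv {C : Type} : Term C → Set ℕ
  | var x => {x}
  | const _ => ∅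

def consts {C : Type} : Term C → Set C
  | var _ => ∅
  | const c => {c}

/-- Substitute the constant `c` for the variable `x`. -/
def substVC {C : Type} (x : ℕ) (c : C) : Term C → Term C
  | var y => if y = x then const c else var y
  | const d => const d

/-- Substitute the variable `x` for the constant `c`. -/
def substCV {C : Type} [DecidableEq C] (c : C) (x : ℕ) : Term C → Term C
  | var y => var y
  | const d => if d = c then var x else const d

end Term

/-- Formulas of the first-order intuitionistic modal language. -/
inductive Formula (σ : Signature) where
  | atom : (P : σ.Pred) → (Fin (σ.arity P) → Term σ.Const) → Formula σ
  | eq : Term σ.Const → Term σ.Const → Formula σ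
  | and : Formula σ → Formula σ → Formula σ
  | or : Formula σ → Formula σ → Formula σ
  | imp : Formula σ → Formula σ → Formula σ
  | box : Formula σ → Formula σ
  | dia : Formula σ → Formula σ
  | all : ℕ → Formula σ → Formula σ
  | ex : ℕ → Formula σ → Formula σ
  | bot : Formula σ

namespace Formula

variable {σ : Signature}

def neg (φ : Formula σ) : Formula σ := φ.imp .bot

def top : Formula σ := Formula.bot.imp .bot

/-- Free variables of a formula. -/
def fv : Formula σ → Set ℕ
  | atom _ ts => ⋃ i, (ts i).fv
  | eq s t => s.fv ∪ t.fv
  | and φ ψ => φ.fv ∪ ψ.fv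
  | or φ ψ => φ.fv ∪ ψ.fv
  | imp φ ψ => φ.fv ∪ ψ.fv
  | box φ => φ.fv
  | dia φ => φ.fv
  | all x φ => φ.fv \ {x}
  | ex x φ => φ.fv \ {x}
  | bot => ∅

/-- All variables occurring in a formula (free, bound, or as a binder). -/
def vars : Formula σ → Set ℕ
  | atom _ ts => ⋃ i, (ts i).fv
  | eq s t => s.fv ∪ t.fv
  | and φ ψ => φ.vars ∪ ψ.vars
  | or φ ψ => φ.vars ∪ ψ.vars
  | imp φ ψ => φ.vars ∪ ψ.vars
  | box φ => φ.vars
  | dia φ => φ.vars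
  | all x φ => insert x φ.vars
  | ex x φ => insert x φ.vars
  | bot => ∅

/-- Constants occurring in a formula. -/
def consts : Formula σ → Set σ.Const
  | atom _ ts => ⋃ i, (ts i).consts
  | eq s t => s.consts ∪ t.consts
  | and φ ψ => φ.consts ∪ ψ.consts
  | or φ ψ => φ.consts ∪ ψ.consts
  | imp φ ψ => φ.consts ∪ ψ.consts
  | box φ => φ.consts
  | dia φ => φ.consts
  | all _ φ => φ.consts
  | ex _ φ => φ.consts
  | bot => ∅

/-- Substitute the constant `c` for free occurrences of the variable `x`. -/
def substVC (x : ℕ) (c : σ.Const) : Formula σ → Formula σ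
  | atom P ts => atom P (fun i => (ts i).substVC x c)
  | eq s t => eq (s.substVC x c) (t.substVC x c)
  | and φ ψ => and (φ.substVC x c) (ψ.substVC x c)
  | or φ ψ => or (φ.substVC x c) (ψ.substVC x c)
  | imp φ ψ => imp (φ.substVC x c) (ψ.substVC x c)
  | box φ => box (φ.substVC x c)
  | dia φ => dia (φ.substVC x c)
  | all y φ => if y = x then all y φ else all y (φ.substVC x c)
  | ex y φ => if y = x then ex y φ else ex y (φ.substVC x c)
  | bot => bot

/-- Substitute the variable `x` for all occurrences of the constant `c`. -/
def substCV [DecidableEq σ.Const] (c : σ.Const) (x : ℕ) : Formula σ → Formula σ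
  | atom P ts => atom P (fun i => (ts i).substCV c x)
  | eq s t => eq (s.substCV c x) (t.substCV c x)
  | and φ ψ => and (φ.substCV c x) (ψ.substCV c x)
  | or φ ψ => or (φ.substCV c x) (ψ.substCV c x)
  | imp φ ψ => imp (φ.substCV c x) (ψ.substCV c x)
  | box φ => box (φ.substCV c x)
  | dia φ => dia (φ.substCV c x)
  | all y φ => all y (φ.substCV c x)
  | ex y φ => ex y (φ.substCV c x)
  | bot => bot

/-- Modal-free formulas. -/
def ModalFree : Formula σ → Prop
  | atom _ _ => True
  | eq _ _ => True
  | and φ ψ => φ.ModalFree ∧ ψ.ModalFree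
  | or φ ψ => φ.ModalFree ∧ ψ.ModalFree
  | imp φ ψ => φ.ModalFree ∧ ψ.ModalFree
  | box _ => False
  | dia _ => False
  | all _ φ => φ.ModalFree
  | ex _ φ => φ.ModalFree
  | bot => True

/-- A sentence is a formula with no free variables. -/
def Sentence (φ : Formula σ) : Prop := φ.fv = ∅

end Formula

/-- The Hilbert system for first-order Fischer Servi logic, parametrized by an
extra set of axioms `Ax` (take `Ax = NoAx` for the base logic `FOFS`). -/
inductive Prv {σ : Signature} (Ax : Formula σ → Prop) : Formula σ → Prop
  | extraAx {φ : Formula σ} : Ax φ → Prv Ax φ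
  -- intuitionistic propositional axioms (substitution instances of IPC theorems)
  | a1 (φ ψ : Formula σ) : Prv Ax (φ.imp (ψ.imp φ))
  | a2 (φ ψ χ : Formula σ) :
      Prv Ax ((φ.imp (ψ.imp χ)).imp ((φ.imp ψ).imp (φ.imp χ)))
  | andI (φ ψ : Formula σ) : Prv Ax (φ.imp (ψ.imp (φ.and ψ)))
  | andE1 (φ ψ : Formula σ) : Prv Ax ((φ.and ψ).imp φ)
  | andE2 (φ ψ : Formula σ) : Prv Ax ((φ.and ψ).imp ψ)
  | orI1 (φ ψ : Formula σ) : Prv Ax (φ.imp (φ.or ψ))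
  | orI2 (φ ψ : Formula σ) : Prv Ax (ψ.imp (φ.or ψ))
  | orE (φ ψ χ : Formula σ) :
      Prv Ax ((φ.imp χ).imp ((ψ.imp χ).imp ((φ.or ψ).imp χ)))
  | exFalso (φ : Formula σ) : Prv Ax (Formula.bot.imp φ)
  -- K axioms
  | kBoxA1 (φ ψ : Formula σ) :
      Prv Ax ((Formula.box (φ.and ψ)).imp ((Formula.box φ).and (Formula.box ψ)))
  | kBoxA2 (φ ψ : Formula σ) :
      Prv Ax (((Formula.box φ).and (Formula.box ψ)).imp (Formula.box (φ.and ψ)))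
  | kBoxB : Prv Ax (Formula.box Formula.top)
  | kDiaA1 (φ ψ : Formula σ) :
      Prv Ax ((Formula.dia (φ.or ψ)).imp ((Formula.dia φ).or (Formula.dia ψ)))
  | kDiaA2 (φ ψ : Formula σ) :
      Prv Ax (((Formula.dia φ).or (Formula.dia ψ)).imp (Formula.dia (φ.or ψ)))
  | kDiaB : Prv Ax (Formula.neg (Formula.dia Formula.bot))
  -- Fischer Servi axioms
  | fs1 (φ ψ : Formula σ) :
      Prv Ax (((Formula.dia φ).imp (Formula.box ψ)).imp (Formula.box (φ.imp ψ)))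
  | fs2 (φ ψ : Formula σ) :
      Prv Ax ((Formula.dia (φ.imp ψ)).imp ((Formula.box φ).imp (Formula.dia ψ)))
  -- quantifier axioms
  | univ (x : ℕ) (c : σ.Const) (φ : Formula σ) :
      Prv Ax ((Formula.all x φ).imp (φ.substVC x c))
  | exist (x : ℕ) (c : σ.Const) (φ : Formula σ) :
      Prv Ax ((φ.substVC x c).imp (Formula.ex x φ))
  | allAnt {x : ℕ} {ψ : Formula σ} (φ : Formula σ) : x ∉ ψ.fv →
      Prv Ax ((Formula.all x (φ.imp ψ)).imp ((Formula.ex x φ).imp ψ))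
  | allCon {x : ℕ} {φ : Formula σ} (ψ : Formula σ) : x ∉ φ.fv →
      Prv Ax ((Formula.all x (φ.imp ψ)).imp (φ.imp (Formula.all x ψ)))
  -- identity axioms
  | idRef (c : σ.Const) : Prv Ax (Formula.eq (Term.const c) (Term.const c))
  | idSub {φ : Formula σ} (x : ℕ) (c₁ c₂ : σ.Const) : φ.ModalFree →
      Prv Ax ((Formula.eq (Term.const c₁) (Term.const c₂)).imp
        ((φ.substVC x c₁).imp (φ.substVC x c₂)))
  -- rules
  | mp {φ ψ : Formula σ} : Prv Ax (φ.imp ψ) → Prv Ax φ → Prv Ax ψ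
  | gen {φ : Formula σ} {x : ℕ} {c : σ.Const} : c ∉ φ.consts →
      Prv Ax (φ.substVC x c) → Prv Ax (Formula.all x φ)
  | regBox {φ ψ : Formula σ} : Prv Ax (φ.imp ψ) →
      Prv Ax ((Formula.box φ).imp (Formula.box ψ))
  | regDia {φ ψ : Formula σ} : Prv Ax (φ.imp ψ) →
      Prv Ax ((Formula.dia φ).imp (Formula.dia ψ))

/-- No extra axioms: the base logic `FOFS`. -/
def NoAx {σ : Signature} : Formula σ → Prop := fun _ => False

/-- The extra axiom `D : □φ → ◇φ`. -/
def DAx {σ : Signature} : Formula σ → Prop :=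
  fun χ => ∃ φ : Formula σ, χ = (Formula.box φ).imp (Formula.dia φ)

/-- Conjunction of a finite list of formulas. -/
def conjList {σ : Signature} (L : List (Formula σ)) : Formula σ :=
  L.foldr Formula.and Formula.top

/-- Disjunction of a finite list of formulas. -/
def disjList {σ : Signature} (L : List (Formula σ)) : Formula σ :=
  L.foldr Formula.or Formula.bot

/-- `Γ ⊢ φ`: some finite conjunction of members of `Γ` provably implies `φ`. -/
def ProvesFrom {σ : Signature} (Ax : Formula σ → Prop)
    (Γ : Set (Formula σ)) (φ : Formula σ) : Prop :=
  ∃ L : List (Formula σ), (∀ γ ∈ L, γ ∈ Γ) ∧ Prv Ax ((conjList L).imp φ)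

/-- The pair `(Γ, Ω)` is consistent: no finite disjunction of members of `Ω`
is derivable from `Γ`. -/
def PairConsistent {σ : Signature} (Ax : Formula σ → Prop)
    (Γ Ω : Set (Formula σ)) : Prop :=
  ¬ ∃ L : List (Formula σ), (∀ γ ∈ L, γ ∈ Ω) ∧ ProvesFrom Ax Γ (disjList L)

/-- A saturated theory over the language whose constants are drawn from `K`:
a consistent, deductively closed, prime, Henkin set of sentences. -/
structure SaturatedIn {σ : Signature} (Ax : Formula σ → Prop)
    (K : Set σ.Const) (Γ : Set (Formula σ)) : Prop where
  inLang : ∀ φ ∈ Γ, Formula.Sentence φ ∧ Formula.consts φ ⊆ K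
  consistent : ¬ ProvesFrom Ax Γ Formula.bot
  dclosed : ∀ φ : Formula σ, Formula.Sentence φ → Formula.consts φ ⊆ K →
    ProvesFrom Ax Γ φ → φ ∈ Γ
  prime : ∀ φ ψ : Formula σ, φ.or ψ ∈ Γ → φ ∈ Γ ∨ ψ ∈ Γ
  henkin : ∀ (x : ℕ) (φ : Formula σ), Formula.ex x φ ∈ Γ →
    ∃ c ∈ K, φ.substVC x c ∈ Γ

/-- `□⁻Γ = {φ : □φ ∈ Γ}`. -/
def BoxSet {σ : Signature} (Γ : Set (Formula σ)) : Set (Formula σ) :=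
  {φ | Formula.box φ ∈ Γ}

/-- `◇̄Γ = {φ ∈ L(K) : ◇φ ∉ Γ}`. -/
def NDSet {σ : Signature} (K : Set σ.Const) (Γ : Set (Formula σ)) :
    Set (Formula σ) :=
  {φ | Formula.Sentence φ ∧ Formula.consts φ ⊆ K ∧ Formula.dia φ ∉ Γ}

/-! ### Auxiliary development for stmt11 -/

section Aux11

open Formula Classical

variable {σ : Signature} {Ax : Formula σ → Prop}

/-- Hypothetical provability: a convenient inductive presentation. -/
inductive PrvFrom (Ax : Formula σ → Prop) (Γ : Set (Formula σ)) :
    Formula σ → Prop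
  | ax {φ} : Prv Ax φ → PrvFrom Ax Γ φ
  | hyp {φ} : φ ∈ Γ → PrvFrom Ax Γ φ
  | mp {φ ψ} : PrvFrom Ax Γ (φ.imp ψ) → PrvFrom Ax Γ φ → PrvFrom Ax Γ ψ

theorem Prv.impRefl (φ : Formula σ) : Prv Ax (φ.imp φ) :=
  Prv.mp (Prv.mp (Prv.a2 φ (φ.imp φ) φ) (Prv.a1 φ (φ.imp φ))) (Prv.a1 φ φ)

theorem Prv.topI : Prv Ax (Formula.top (σ := σ)) := Prv.impRefl Formula.bot

theorem Prv.comp {φ ψ χ : Formula σ} (h1 : Prv Ax (φ.imp ψ))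
    (h2 : Prv Ax (ψ.imp χ)) : Prv Ax (φ.imp χ) :=
  Prv.mp (Prv.mp (Prv.a2 φ ψ χ) (Prv.mp (Prv.a1 (ψ.imp χ) φ) h2)) h1

theorem Prv.mpUnder {φ ψ χ : Formula σ} (h1 : Prv Ax (φ.imp (ψ.imp χ)))
    (h2 : Prv Ax (φ.imp ψ)) : Prv Ax (φ.imp χ) :=
  Prv.mp (Prv.mp (Prv.a2 φ ψ χ) h1) h2

theorem PrvFrom.mono {Γ Δ : Set (Formula σ)} {φ : Formula σ}
    (h : PrvFrom Ax Γ φ) (hs : Γ ⊆ Δ) : PrvFrom Ax Δ φ := by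
  induction h with
  | ax h => exact .ax h
  | hyp h => exact .hyp (hs h)
  | mp _ _ ih1 ih2 => exact .mp ih1 ih2

theorem PrvFrom.deduction {Γ : Set (Formula σ)} {ψ φ : Formula σ}
    (h : PrvFrom Ax (insert ψ Γ) φ) : PrvFrom Ax Γ (ψ.imp φ) := by
  induction h with
  | ax h => exact .mp (.ax (Prv.a1 _ _)) (.ax h)
  | hyp h =>
    rcases h with h | h
    · subst h; exact .ax (Prv.impRefl _)
    · exact .mp (.ax (Prv.a1 _ _)) (.hyp h)
  | mp _ _ ih1 ih2 => exact .mp (.mp (.ax (Prv.a2 _ _ _)) ih1) ih2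

theorem PrvFrom.of_empty {φ : Formula σ}
    (h : PrvFrom Ax (∅ : Set (Formula σ)) φ) : Prv Ax φ := by
  induction h with
  | ax h => exact h
  | hyp h => exact absurd h (Set.notMem_empty _)
  | mp _ _ ih1 ih2 => exact ih1.mp ih2

/-- the C combinator -/
theorem Prv.swap {φ ψ χ : Formula σ} (h : Prv Ax (φ.imp (ψ.imp χ))) :
    Prv Ax (ψ.imp (φ.imp χ)) := by
  have : PrvFrom Ax (insert φ (insert ψ (∅ : Set (Formula σ)))) χ :=
    .mp (.mp (.ax h) (.hyp (by simp))) (.hyp (by simp))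
  exact this.deduction.deduction.of_empty

theorem Prv.conj_proj {L : List (Formula σ)} {γ : Formula σ} (h : γ ∈ L) :
    Prv Ax ((conjList L).imp γ) := by
  induction L with
  | nil => simp at h
  | cons a L ih =>
    rcases List.mem_cons.mp h with h | h
    · subst h; exact Prv.andE1 _ _
    · exact (Prv.andE2 a (conjList L)).comp (ih h)

theorem Prv.conj_intro {L : List (Formula σ)} {χ : Formula σ}
    (h : ∀ γ ∈ L, Prv Ax (χ.imp γ)) : Prv Ax (χ.imp (conjList L)) := by
  induction L with
  | nil => exact Prv.mp (Prv.a1 _ _) Prv.topI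
  | cons a L ih =>
    exact Prv.mpUnder ((h a (by simp)).comp (Prv.andI a (conjList L)))
      (ih fun γ hγ => h γ (by simp [hγ]))

theorem Prv.conj_mono {L L' : List (Formula σ)} (h : ∀ γ ∈ L, γ ∈ L') :
    Prv Ax ((conjList L').imp (conjList L)) :=
  Prv.conj_intro fun γ hγ => Prv.conj_proj (h γ hγ)

theorem Prv.disj_intro {L : List (Formula σ)} {γ : Formula σ} (h : γ ∈ L) :
    Prv Ax (γ.imp (disjList L)) := by
  induction L with
  | nil => simp at h
  | cons a L ih =>
    rcases List.mem_cons.mp h with h | h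
    · subst h; exact Prv.orI1 _ _
    · exact (ih h).comp (Prv.orI2 a (disjList L))

theorem PrvFrom.disj_elim {Γ : Set (Formula σ)} {L : List (Formula σ)}
    {χ : Formula σ} (h : ∀ γ ∈ L, PrvFrom Ax Γ (γ.imp χ)) :
    PrvFrom Ax Γ ((disjList L).imp χ) := by
  induction L with
  | nil => exact .ax (Prv.exFalso χ)
  | cons a L ih =>
    exact .mp (.mp (.ax (Prv.orE a (disjList L) χ)) (h a (by simp)))
      (ih fun γ hγ => h γ (by simp [hγ]))

theorem Prv.disj_mono {L L' : List (Formula σ)} (h : ∀ γ ∈ L, γ ∈ L') :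
    Prv Ax ((disjList L).imp (disjList L')) :=
  PrvFrom.of_empty (PrvFrom.disj_elim fun γ hγ => .ax (Prv.disj_intro (h γ hγ)))

theorem PrvFrom.conjList {Γ : Set (Formula σ)} {L : List (Formula σ)}
    (h : ∀ γ ∈ L, γ ∈ Γ) : PrvFrom Ax Γ (conjList L) := by
  induction L with
  | nil => exact .ax Prv.topI
  | cons a L ih =>
    exact .mp (.mp (.ax (Prv.andI a (FOFS.conjList L))) (.hyp (h a (by simp))))
      (ih fun γ hγ => h γ (by simp [hγ]))

theorem provesFrom_iff_prvFrom {Γ : Set (Formula σ)} {φ : Formula σ} :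
    ProvesFrom Ax Γ φ ↔ PrvFrom Ax Γ φ := by
  constructor
  · rintro ⟨L, hL, hp⟩
    exact .mp (.ax hp) (PrvFrom.conjList hL)
  · intro h
    induction h with
    | ax h => exact ⟨[], by simp, Prv.mp (Prv.a1 _ _) h⟩
    | hyp h => exact ⟨[_], by simpa, Prv.andE1 _ _⟩
    | @mp φ ψ _ _ ih1 ih2 =>
      obtain ⟨L1, hL1, hp1⟩ := ih1
      obtain ⟨L2, hL2, hp2⟩ := ih2
      refine ⟨L1 ++ L2, ?_, ?_⟩
      · intro γ hγ; rcases List.mem_append.mp hγ with h | h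
        exacts [hL1 γ h, hL2 γ h]
      · exact Prv.mpUnder
          ((Prv.conj_mono (by intro γ h; simp [h])).comp hp1)
          ((Prv.conj_mono (by intro γ h; simp [h])).comp hp2)

/-! #### Syntactic lemmas -/

theorem Term.consts_finite {C : Type} (t : Term C) : t.consts.Finite := by
  cases t <;> simp [Term.consts]

theorem Formula.consts_finite (φ : Formula σ) : φ.consts.Finite := by
  induction φ <;> simp only [Formula.consts] <;>
    first
      | exact Set.finite_iUnion fun i => Term.consts_finite _
      | exact Set.Finite.union (by assumption) (by assumption)
      | first
        | exact Set.Finite.union (Term.consts_finite _) (Term.consts_finite _)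
        | assumption
      | exact Set.finite_empty

theorem Term.fv_substVC_sub {C : Type} (x : ℕ) (c : C) (t : Term C) :
    (t.substVC x c).fv ⊆ t.fv \ {x} := by
  cases t with
  | var y =>
    by_cases h : y = x <;> simp [Term.substVC, Term.fv, h]
  | const d => simp [Term.substVC, Term.fv]

theorem Formula.fv_substVC_sub (x : ℕ) (c : σ.Const) (φ : Formula σ) :
    (φ.substVC x c).fv ⊆ φ.fv \ {x} := by
  induction φ with
  | atom P ts =>
    simp only [Formula.substVC, Formula.fv]
    exact Set.iUnion_subset fun i =>
      (Term.fv_substVC_sub x c (ts i)).trans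
        (Set.diff_subset_diff_left (Set.subset_iUnion (fun j => (ts j).fv) i))
  | eq s t =>
    simp only [Formula.substVC, Formula.fv]
    refine Set.union_subset ?_ ?_
    · exact (Term.fv_substVC_sub x c s).trans
        (Set.diff_subset_diff_left Set.subset_union_left)
    · exact (Term.fv_substVC_sub x c t).trans
        (Set.diff_subset_diff_left Set.subset_union_right)
  | and φ ψ ihφ ihψ =>
    simp only [Formula.substVC, Formula.fv]
    refine Set.union_subset (ihφ.trans ?_) (ihψ.trans ?_) <;>
      exact Set.diff_subset_diff_left (by simp)
  | or φ ψ ihφ ihψ =>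
    simp only [Formula.substVC, Formula.fv]
    refine Set.union_subset (ihφ.trans ?_) (ihψ.trans ?_) <;>
      exact Set.diff_subset_diff_left (by simp)
  | imp φ ψ ihφ ihψ =>
    simp only [Formula.substVC, Formula.fv]
    refine Set.union_subset (ihφ.trans ?_) (ihψ.trans ?_) <;>
      exact Set.diff_subset_diff_left (by simp)
  | box φ ih => simpa [Formula.substVC, Formula.fv] using ih
  | dia φ ih => simpa [Formula.substVC, Formula.fv] using ih
  | all y φ ih =>
    by_cases h : y = x
    · subst h
      simp only [Formula.substVC, if_pos rfl, Formula.fv]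
      intro v hv; simp only [Set.mem_diff, Set.mem_singleton_iff] at hv ⊢
      exact ⟨⟨hv.1, hv.2⟩, hv.2⟩
    · simp only [Formula.substVC, if_neg h, Formula.fv]
      intro v hv; simp only [Set.mem_diff, Set.mem_singleton_iff] at hv ⊢
      have := ih hv.1
      simp only [Set.mem_diff, Set.mem_singleton_iff] at this
      exact ⟨⟨this.1, hv.2⟩, this.2⟩
  | ex y φ ih =>
    by_cases h : y = x
    · subst h
      simp only [Formula.substVC, if_pos rfl, Formula.fv]
      intro v hv; simp only [Set.mem_diff, Set.mem_singleton_iff] at hv ⊢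
      exact ⟨⟨hv.1, hv.2⟩, hv.2⟩
    · simp only [Formula.substVC, if_neg h, Formula.fv]
      intro v hv; simp only [Set.mem_diff, Set.mem_singleton_iff] at hv ⊢
      have := ih hv.1
      simp only [Set.mem_diff, Set.mem_singleton_iff] at this
      exact ⟨⟨this.1, hv.2⟩, this.2⟩
  | bot => simp [Formula.substVC, Formula.fv]

theorem Term.consts_substVC_sub {C : Type} (x : ℕ) (c : C) (t : Term C) :
    (t.substVC x c).consts ⊆ insert c t.consts := by
  cases t with
  | var y => by_cases h : y = x <;> simp [Term.substVC, Term.consts, h]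
  | const d => simp [Term.substVC, Term.consts]

theorem Formula.consts_substVC_sub (x : ℕ) (c : σ.Const) (φ : Formula σ) :
    (φ.substVC x c).consts ⊆ insert c φ.consts := by
  induction φ with
  | atom P ts =>
    simp only [Formula.substVC, Formula.consts]
    exact Set.iUnion_subset fun i => (Term.consts_substVC_sub x c (ts i)).trans
      (Set.insert_subset_insert (Set.subset_iUnion (fun j => (ts j).consts) i))
  | eq s t =>
    simp only [Formula.substVC, Formula.consts]
    refine Set.union_subset ((Term.consts_substVC_sub x c s).trans ?_)
      ((Term.consts_substVC_sub x c t).trans ?_) <;>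
      exact Set.insert_subset_insert (by simp)
  | and φ ψ ihφ ihψ =>
    simp only [Formula.substVC, Formula.consts]
    refine Set.union_subset (ihφ.trans ?_) (ihψ.trans ?_) <;>
      exact Set.insert_subset_insert (by simp)
  | or φ ψ ihφ ihψ =>
    simp only [Formula.substVC, Formula.consts]
    refine Set.union_subset (ihφ.trans ?_) (ihψ.trans ?_) <;>
      exact Set.insert_subset_insert (by simp)
  | imp φ ψ ihφ ihψ =>
    simp only [Formula.substVC, Formula.consts]
    refine Set.union_subset (ihφ.trans ?_) (ihψ.trans ?_) <;>
      exact Set.insert_subset_insert (by simp)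
  | box φ ih => simpa [Formula.substVC, Formula.consts] using ih
  | dia φ ih => simpa [Formula.substVC, Formula.consts] using ih
  | all y φ ih =>
    by_cases h : y = x <;>
      simp only [Formula.substVC, h, if_pos, if_neg, ite_true, ite_false,
        Formula.consts]
    · exact Set.subset_insert _ _
    · exact ih
  | ex y φ ih =>
    by_cases h : y = x <;>
      simp only [Formula.substVC, h, if_pos, if_neg, ite_true, ite_false,
        Formula.consts]
    · exact Set.subset_insert _ _
    · exact ih
  | bot => simp [Formula.substVC, Formula.consts]

theorem Term.substVC_noop {C : Type} {x : ℕ} (c : C) {t : Term C}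
    (h : x ∉ t.fv) : t.substVC x c = t := by
  cases t with
  | var y =>
    simp only [Term.fv, Set.mem_singleton_iff] at h
    simp [Term.substVC, Ne.symm h]
  | const d => rfl

theorem Formula.substVC_noop {x : ℕ} (c : σ.Const) {φ : Formula σ}
    (h : x ∉ φ.fv) : φ.substVC x c = φ := by
  induction φ with
  | atom P ts =>
    simp only [Formula.fv, Set.mem_iUnion, not_exists] at h
    simp only [Formula.substVC]
    congr 1; funext i; exact Term.substVC_noop c (h i)
  | eq s t =>
    simp only [Formula.fv, Set.mem_union, not_or] at h
    simp [Formula.substVC, Term.substVC_noop c h.1, Term.substVC_noop c h.2]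
  | and φ ψ ihφ ihψ =>
    simp only [Formula.fv, Set.mem_union, not_or] at h
    simp [Formula.substVC, ihφ h.1, ihψ h.2]
  | or φ ψ ihφ ihψ =>
    simp only [Formula.fv, Set.mem_union, not_or] at h
    simp [Formula.substVC, ihφ h.1, ihψ h.2]
  | imp φ ψ ihφ ihψ =>
    simp only [Formula.fv, Set.mem_union, not_or] at h
    simp [Formula.substVC, ihφ h.1, ihψ h.2]
  | box φ ih => simp only [Formula.fv] at h; simp [Formula.substVC, ih h]
  | dia φ ih => simp only [Formula.fv] at h; simp [Formula.substVC, ih h]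
  | all y φ ih =>
    by_cases hyx : y = x
    · simp [Formula.substVC, hyx]
    · simp only [Formula.fv, Set.mem_diff, Set.mem_singleton_iff, not_and,
        not_not] at h
      have hx : x ∉ φ.fv := fun hx => hyx (h hx).symm
      simp [Formula.substVC, hyx, ih hx]
  | ex y φ ih =>
    by_cases hyx : y = x
    · simp [Formula.substVC, hyx]
    · simp only [Formula.fv, Set.mem_diff, Set.mem_singleton_iff, not_and,
        not_not] at h
      have hx : x ∉ φ.fv := fun hx => hyx (h hx).symm
      simp [Formula.substVC, hyx, ih hx]
  | bot => rfl

theorem sentence_substVC {x : ℕ} {c : σ.Const} {φ : Formula σ}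
    (h : Formula.Sentence (Formula.ex x φ)) :
    Formula.Sentence (φ.substVC x c) := by
  have h' : φ.fv \ {x} = ∅ := h
  refine Set.eq_empty_of_subset_empty ?_
  refine (Formula.fv_substVC_sub x c φ).trans ?_
  rw [h']

theorem sentence_conjList {L : List (Formula σ)}
    (h : ∀ γ ∈ L, Formula.Sentence γ) : Formula.Sentence (conjList L) := by
  induction L with
  | nil => simp [conjList, Formula.Sentence, Formula.fv, Formula.top]
  | cons a L ih =>
    have ha : a.fv = ∅ := h a (by simp)
    have hL : (conjList L).fv = ∅ := ih fun γ hγ => h γ (by simp [hγ])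
    show (a.and (conjList L)).fv = ∅
    simp [Formula.fv, ha, hL]

theorem sentence_disjList {L : List (Formula σ)}
    (h : ∀ γ ∈ L, Formula.Sentence γ) : Formula.Sentence (disjList L) := by
  induction L with
  | nil => simp [disjList, Formula.Sentence, Formula.fv]
  | cons a L ih =>
    have ha : a.fv = ∅ := h a (by simp)
    have hL : (disjList L).fv = ∅ := ih fun γ hγ => h γ (by simp [hγ])
    show (a.or (disjList L)).fv = ∅
    simp [Formula.fv, ha, hL]

theorem notMem_consts_conjList {L : List (Formula σ)} {c : σ.Const}
    (h : ∀ γ ∈ L, c ∉ γ.consts) : c ∉ (conjList L).consts := by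
  induction L with
  | nil => simp [conjList, Formula.consts, Formula.top]
  | cons a L ih =>
    have : c ∉ (FOFS.conjList L).consts := ih fun γ hγ => h γ (by simp [hγ])
    show c ∉ (a.and (conjList L)).consts
    simp only [Formula.consts, Set.mem_union]
    exact fun hc => hc.elim (h a (by simp)) this

theorem notMem_consts_disjList {L : List (Formula σ)} {c : σ.Const}
    (h : ∀ γ ∈ L, c ∉ γ.consts) : c ∉ (disjList L).consts := by
  induction L with
  | nil => simp [disjList, Formula.consts]
  | cons a L ih =>
    have : c ∉ (FOFS.disjList L).consts := ih fun γ hγ => h γ (by simp [hγ])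
    show c ∉ (a.or (disjList L)).consts
    simp only [Formula.consts, Set.mem_union]
    exact fun hc => hc.elim (h a (by simp)) this

/-! #### Countability of formulas -/

noncomputable def tCode (ec : σ.Const → ℕ) : Term σ.Const → ℕ
  | .var x => 2 * x
  | .const c => 2 * ec c + 1

theorem tCode_inj {ec : σ.Const → ℕ} (hec : Function.Injective ec) :
    Function.Injective (tCode (σ := σ) ec) := by
  intro s t h
  cases s <;> cases t <;> simp only [tCode] at h
  · congr 1; omega
  · omega
  · omega
  · congr 1; exact hec (by omega)

noncomputable def fCode (ec : σ.Const → ℕ) (ep : σ.Pred → ℕ) :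
    Formula σ → ℕ
  | .atom P ts => Nat.pair 0 (Nat.pair (ep P)
      (Encodable.encode (List.ofFn fun i => tCode ec (ts i))))
  | .eq s t => Nat.pair 1 (Nat.pair (tCode ec s) (tCode ec t))
  | .and φ ψ => Nat.pair 2 (Nat.pair (fCode ec ep φ) (fCode ec ep ψ))
  | .or φ ψ => Nat.pair 3 (Nat.pair (fCode ec ep φ) (fCode ec ep ψ))
  | .imp φ ψ => Nat.pair 4 (Nat.pair (fCode ec ep φ) (fCode ec ep ψ))
  | .box φ => Nat.pair 5 (fCode ec ep φ)
  | .dia φ => Nat.pair 6 (fCode ec ep φ)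
  | .all x φ => Nat.pair 7 (Nat.pair x (fCode ec ep φ))
  | .ex x φ => Nat.pair 8 (Nat.pair x (fCode ec ep φ))
  | .bot => Nat.pair 9 0

theorem fCode_inj {ec : σ.Const → ℕ} {ep : σ.Pred → ℕ}
    (hec : Function.Injective ec) (hep : Function.Injective ep) :
    Function.Injective (fCode (σ := σ) ec ep) := by
  intro φ ψ h
  induction φ generalizing ψ with
  | atom P ts =>
    cases ψ <;> simp [fCode, Nat.pair_eq_pair] at h
    obtain ⟨h1, h2⟩ := h
    obtain rfl := hep h1
    congr 1
    funext i
    exact tCode_inj hec (congrFun ((List.ofFn_inj).mp h2) i)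
  | eq s t =>
    cases ψ <;> simp [fCode, Nat.pair_eq_pair] at h
    rw [tCode_inj hec h.1, tCode_inj hec h.2]
  | and φ₁ φ₂ ih1 ih2 =>
    cases ψ <;> simp [fCode, Nat.pair_eq_pair] at h
    rw [ih1 h.1, ih2 h.2]
  | or φ₁ φ₂ ih1 ih2 =>
    cases ψ <;> simp [fCode, Nat.pair_eq_pair] at h
    rw [ih1 h.1, ih2 h.2]
  | imp φ₁ φ₂ ih1 ih2 =>
    cases ψ <;> simp [fCode, Nat.pair_eq_pair] at h
    rw [ih1 h.1, ih2 h.2]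
  | box φ₁ ih =>
    cases ψ <;> simp [fCode, Nat.pair_eq_pair] at h
    rw [ih h]
  | dia φ₁ ih =>
    cases ψ <;> simp [fCode, Nat.pair_eq_pair] at h
    rw [ih h]
  | all x φ₁ ih =>
    cases ψ <;> simp [fCode, Nat.pair_eq_pair] at h
    rw [h.1, ih h.2]
  | ex x φ₁ ih =>
    cases ψ <;> simp [fCode, Nat.pair_eq_pair] at h
    rw [h.1, ih h.2]
  | bot =>
    cases ψ <;> simp [fCode, Nat.pair_eq_pair] at h
    rfl

theorem formula_countable [Countable σ.Const] [Countable σ.Pred] :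
    Countable (Formula σ) := by
  obtain ⟨ec, hec⟩ := Countable.exists_injective_nat σ.Const
  obtain ⟨ep, hep⟩ := Countable.exists_injective_nat σ.Pred
  exact (fCode_inj hec hep).countable

/-! #### Pair-consistency lemmas -/

theorem pc_iff {Γ Ω : Set (Formula σ)} :
    PairConsistent Ax Γ Ω ↔
      ¬∃ L : List (Formula σ), (∀ γ ∈ L, γ ∈ Ω) ∧ PrvFrom Ax Γ (disjList L) := by
  unfold PairConsistent
  simp only [provesFrom_iff_prvFrom]

theorem PrvFrom.compAx {Γ : Set (Formula σ)} {φ ψ χ : Formula σ}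
    (h1 : PrvFrom Ax Γ (φ.imp ψ)) (h2 : Prv Ax (ψ.imp χ)) :
    PrvFrom Ax Γ (φ.imp χ) :=
  .mp (.ax (Prv.mp (Prv.a2 φ ψ χ) (Prv.mp (Prv.a1 (ψ.imp χ) φ) h2))) h1

theorem pc_disjoint {Γ Ω : Set (Formula σ)} (h : PairConsistent Ax Γ Ω)
    {φ : Formula σ} (hφ : φ ∈ Ω) : φ ∉ Γ := by
  intro hmem
  exact pc_iff.mp h ⟨[φ], by simpa,
    .mp (.ax (Prv.orI1 φ Formula.bot)) (.hyp hmem)⟩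

theorem pc_split {Γ Ω : Set (Formula σ)} {φ : Formula σ}
    (h : PairConsistent Ax Γ Ω)
    (h1 : ¬PairConsistent Ax (insert φ Γ) Ω) :
    PairConsistent Ax Γ (insert φ Ω) := by
  classical
  rw [pc_iff] at h h1 ⊢
  push_neg at h1
  obtain ⟨L, hL, hp⟩ := h1
  have hded : PrvFrom Ax Γ (φ.imp (disjList L)) := hp.deduction
  rintro ⟨L', hL', hp'⟩
  set L'' := L ++ L'.filter (fun γ => decide (γ ≠ φ)) with hL''def
  apply h
  refine ⟨L'', ?_, ?_⟩
  · intro γ hγ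
    rcases List.mem_append.mp hγ with h' | h'
    · exact hL γ h'
    · obtain ⟨hmem, hne⟩ := List.mem_filter.mp h'
      rcases hL' γ hmem with h'' | h''
      · exact absurd h'' (by simpa using hne)
      · exact h''
  · refine .mp (PrvFrom.disj_elim ?_) hp'
    intro γ hγ
    by_cases hγφ : γ = φ
    · subst hγφ
      exact hded.compAx (Prv.disj_mono fun δ hδ => List.mem_append.mpr (.inl hδ))
    · exact .ax (Prv.disj_intro (List.mem_append.mpr (.inr
        (List.mem_filter.mpr ⟨hγ, by simpa using hγφ⟩))))

/-- The key quantifier manipulation: discharging a fresh witness constant. -/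
theorem prv_exists_rule {χ D φ : Formula σ} {x : ℕ} {c : σ.Const}
    (hχ : x ∉ χ.fv) (hD : x ∉ D.fv) (hcχ : c ∉ χ.consts) (hcD : c ∉ D.consts)
    (hcφ : c ∉ φ.consts)
    (h : Prv Ax (χ.imp ((φ.substVC x c).imp D))) :
    Prv Ax (χ.imp ((Formula.ex x φ).imp D)) := by
  have hχD : x ∉ (χ.imp D).fv := by
    simp only [Formula.fv, Set.mem_union]
    exact fun h' => h'.elim hχ hD
  have h1 : Prv Ax ((φ.substVC x c).imp (χ.imp D)) := Prv.swap h
  have hsub : (φ.imp (χ.imp D)).substVC x c = (φ.substVC x c).imp (χ.imp D) := by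
    show Formula.imp _ _ = _
    rw [Formula.substVC_noop c hχD]
  have hc : c ∉ (φ.imp (χ.imp D)).consts := by
    simp only [Formula.consts, Set.mem_union]
    rintro (h' | h' | h') <;> [exact hcφ h'; exact hcχ h'; exact hcD h']
  have hgen : Prv Ax (Formula.all x (φ.imp (χ.imp D))) :=
    Prv.gen hc (hsub ▸ h1)
  have hall := Prv.allAnt (Ax := Ax) (x := x) (ψ := χ.imp D) φ hχD
  exact Prv.swap (hall.mp hgen)

theorem pc_insert_witness {Γ Ω : Set (Formula σ)}
    (hΓsent : ∀ ψ ∈ Γ, Formula.Sentence ψ) (hΩsent : ∀ ψ ∈ Ω, Formula.Sentence ψ)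
    {x : ℕ} {φ : Formula σ} (hmem : Formula.ex x φ ∈ Γ) {c : σ.Const}
    (hcΓ : ∀ ψ ∈ Γ, c ∉ ψ.consts) (hcΩ : ∀ ψ ∈ Ω, c ∉ ψ.consts)
    (h : PairConsistent Ax Γ Ω) :
    PairConsistent Ax (insert (φ.substVC x c) Γ) Ω := by
  rw [pc_iff] at h ⊢
  rintro ⟨L, hL, hp⟩
  apply h
  refine ⟨L, hL, ?_⟩
  set D := disjList L with hD
  have hded : PrvFrom Ax Γ ((φ.substVC x c).imp D) := hp.deduction
  obtain ⟨M, hM, hprv⟩ := provesFrom_iff_prvFrom.mpr hded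
  set χ := conjList M with hχ
  have hχsent : χ.fv = ∅ := sentence_conjList fun γ hγ => hΓsent γ (hM γ hγ)
  have hDsent : D.fv = ∅ := sentence_disjList fun γ hγ => hΩsent γ (hL γ hγ)
  have hkey : Prv Ax (χ.imp ((Formula.ex x φ).imp D)) := by
    refine prv_exists_rule ?_ ?_ ?_ ?_ ?_ hprv
    · simp [hχsent]
    · simp [hDsent]
    · exact notMem_consts_conjList fun γ hγ => hcΓ γ (hM γ hγ)
    · exact notMem_consts_disjList fun γ hγ => hcΩ γ (hL γ hγ)
    · exact hcΓ (Formula.ex x φ) hmem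
  exact .mp (.mp (.ax hkey) (PrvFrom.conjList hM)) (.hyp hmem)

theorem exists_stage {α : Type*} {S : ℕ → Set α}
    (mono : ∀ {m n : ℕ}, m ≤ n → S m ⊆ S n) (L : List α)
    (h : ∀ γ ∈ L, γ ∈ ⋃ n, S n) : ∃ n, ∀ γ ∈ L, γ ∈ S n := by
  induction L with
  | nil => exact ⟨0, by simp⟩
  | cons a L ih =>
    obtain ⟨n, hn⟩ := ih fun γ hγ => h γ (by simp [hγ])
    obtain ⟨_, ⟨m, rfl⟩, hm⟩ := h a (by simp)
    refine ⟨max n m, ?_⟩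
    intro γ hγ
    rcases List.mem_cons.mp hγ with rfl | hγ
    · exact mono (le_max_right n m) hm
    · exact mono (le_max_left n m) (hn γ hγ)

theorem pc_iUnion {Gs Os : ℕ → Set (Formula σ)}
    (monoG : ∀ {m n : ℕ}, m ≤ n → Gs m ⊆ Gs n)
    (monoO : ∀ {m n : ℕ}, m ≤ n → Os m ⊆ Os n)
    (h : ∀ n, PairConsistent Ax (Gs n) (Os n)) :
    PairConsistent Ax (⋃ n, Gs n) (⋃ n, Os n) := by
  rintro ⟨L, hL, M, hM, hp⟩
  obtain ⟨n, hn⟩ := exists_stage monoO L hL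
  obtain ⟨m, hm⟩ := exists_stage monoG M hM
  exact h (max n m) ⟨L, fun γ hγ => monoO (le_max_left n m) (hn γ hγ),
    M, fun γ hγ => monoG (le_max_right n m) (hm γ hγ), hp⟩

/-! #### The Lindenbaum construction -/

variable (Ax) in
/-- A state of the Lindenbaum construction. -/
structure LState (Γ Ω : Set (Formula σ)) where
  G : Set (Formula σ)
  O : Set (Formula σ)
  hG : Γ ⊆ G
  hO : Ω ⊆ O
  con : PairConsistent Ax G O
  sent : ∀ φ ∈ G ∪ O, Formula.Sentence φ
  fresh : {c : σ.Const | ∀ φ ∈ G ∪ O, c ∉ φ.consts}.Infinite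

variable {Γ Ω : Set (Formula σ)}

def addLeft (s : LState Ax Γ Ω) (φ : Formula σ) (hs : Formula.Sentence φ)
    (hc : PairConsistent Ax (insert φ s.G) s.O) : LState Ax Γ Ω where
  G := insert φ s.G
  O := s.O
  hG := s.hG.trans (Set.subset_insert _ _)
  hO := s.hO
  con := hc
  sent := by
    rintro ψ (h | h)
    · rcases h with rfl | h
      · exact hs
      · exact s.sent ψ (.inl h)
    · exact s.sent ψ (.inr h)
  fresh := by
    refine (s.fresh.diff φ.consts_finite).mono ?_
    rintro c ⟨hc1, hc2⟩ ψ h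
    rcases h with h | h
    · rcases h with rfl | h
      · exact hc2
      · exact hc1 ψ (.inl h)
    · exact hc1 ψ (.inr h)

def addRight (s : LState Ax Γ Ω) (φ : Formula σ) (hs : Formula.Sentence φ)
    (hc : ¬PairConsistent Ax (insert φ s.G) s.O) : LState Ax Γ Ω where
  G := s.G
  O := insert φ s.O
  hG := s.hG
  hO := s.hO.trans (Set.subset_insert _ _)
  con := pc_split s.con hc
  sent := by
    rintro ψ (h | h)
    · exact s.sent ψ (.inl h)
    · rcases h with rfl | h
      · exact hs
      · exact s.sent ψ (.inr h)
  fresh := by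
    refine (s.fresh.diff φ.consts_finite).mono ?_
    rintro c ⟨hc1, hc2⟩ ψ h
    rcases h with h | h
    · exact hc1 ψ (.inl h)
    · rcases h with rfl | h
      · exact hc2
      · exact hc1 ψ (.inr h)

noncomputable def freshC (s : LState Ax Γ Ω) : σ.Const :=
  s.fresh.nonempty.choose

theorem freshC_spec (s : LState Ax Γ Ω) :
    ∀ φ ∈ s.G ∪ s.O, freshC s ∉ φ.consts :=
  s.fresh.nonempty.choose_spec

noncomputable def addWitness (s : LState Ax Γ Ω) (x : ℕ) (ψ : Formula σ)
    (hmem : Formula.ex x ψ ∈ s.G) : LState Ax Γ Ω where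
  G := insert (ψ.substVC x (freshC s)) s.G
  O := s.O
  hG := s.hG.trans (Set.subset_insert _ _)
  hO := s.hO
  con := pc_insert_witness (fun γ h => s.sent γ (.inl h))
    (fun γ h => s.sent γ (.inr h)) hmem
    (fun γ h => freshC_spec s γ (.inl h)) (fun γ h => freshC_spec s γ (.inr h))
    s.con
  sent := by
    rintro χ (h | h)
    · rcases h with rfl | h
      · exact sentence_substVC (s.sent _ (.inl hmem))
      · exact s.sent χ (.inl h)
    · exact s.sent χ (.inr h)
  fresh := by
    refine (s.fresh.diff ((ψ.consts_finite.insert (freshC s)))).mono ?_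
    rintro c ⟨hc1, hc2⟩ χ h
    rcases h with h | h
    · rcases h with rfl | h
      · exact fun hmem' => hc2 (Formula.consts_substVC_sub _ _ _ hmem')
      · exact hc1 χ (.inl h)
    · exact hc1 χ (.inr h)

open Classical in
noncomputable def lstep (s : LState Ax Γ Ω) (φ : Formula σ) : LState Ax Γ Ω :=
  if hs : Formula.Sentence φ then
    if hc : PairConsistent Ax (insert φ s.G) s.O then
      match φ, hs, hc with
      | Formula.ex x ψ, hs, hc =>
          addWitness (addLeft s (Formula.ex x ψ) hs hc) x ψ (Set.mem_insert _ _)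
      | φ, hs, hc => addLeft s φ hs hc
    else addRight s φ hs hc
  else s

theorem lstep_G_mono (s : LState Ax Γ Ω) (φ : Formula σ) :
    s.G ⊆ (lstep s φ).G := by
  unfold lstep
  split
  · split
    · split
      · exact (Set.subset_insert _ _).trans (Set.subset_insert _ _)
      · exact Set.subset_insert _ _
    · exact subset_rfl
  · exact subset_rfl

theorem lstep_O_mono (s : LState Ax Γ Ω) (φ : Formula σ) :
    s.O ⊆ (lstep s φ).O := by
  unfold lstep
  split
  · split
    · split
      · exact subset_rfl
      · exact subset_rfl
    · exact Set.subset_insert _ _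
  · exact subset_rfl

theorem lstep_cover (s : LState Ax Γ Ω) (φ : Formula σ)
    (hs : Formula.Sentence φ) :
    φ ∈ (lstep s φ).G ∨ φ ∈ (lstep s φ).O := by
  unfold lstep
  rw [dif_pos hs]
  split
  · split
    · exact Or.inl (Set.mem_insert_of_mem _ (Set.mem_insert _ _))
    · exact Or.inl (Set.mem_insert _ _)
  · exact Or.inr (Set.mem_insert _ _)

theorem lstep_henkin (s : LState Ax Γ Ω) (x : ℕ) (ψ : Formula σ)
    (hs : Formula.Sentence (Formula.ex x ψ)) :
    Formula.ex x ψ ∈ (lstep s (Formula.ex x ψ)).O ∨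
      ∃ c, ψ.substVC x c ∈ (lstep s (Formula.ex x ψ)).G := by
  unfold lstep
  rw [dif_pos hs]
  by_cases hc : PairConsistent Ax (insert (Formula.ex x ψ) s.G) s.O
  · rw [dif_pos hc]
    exact Or.inr ⟨_, Set.mem_insert _ _⟩
  · rw [dif_neg hc]
    exact Or.inl (Set.mem_insert _ _)

noncomputable def lchain (s0 : LState Ax Γ Ω) (e : ℕ → Formula σ) :
    ℕ → LState Ax Γ Ω
  | 0 => s0
  | n + 1 => lstep (lchain s0 e n) (e n)

theorem lchain_G_mono (s0 : LState Ax Γ Ω) (e : ℕ → Formula σ)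
    {m n : ℕ} (h : m ≤ n) : (lchain s0 e m).G ⊆ (lchain s0 e n).G := by
  induction h with
  | refl => exact subset_rfl
  | step _ ih => exact ih.trans (lstep_G_mono _ _)

theorem lchain_O_mono (s0 : LState Ax Γ Ω) (e : ℕ → Formula σ)
    {m n : ℕ} (h : m ≤ n) : (lchain s0 e m).O ⊆ (lchain s0 e n).O := by
  induction h with
  | refl => exact subset_rfl
  | step _ ih => exact ih.trans (lstep_O_mono _ _)

end Aux11

end FOFS

open FOFS Formula in
/-- Lindenbaum-type extension: a consistent pair `(Γ,Ω)` of sets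
of sentences over a countable language with infinitely many constants unused
in `Γ` and `Ω` extends to a saturated theory `Γ' ⊇ Γ` with `Ω ∩ Γ' = ∅`. -/
theorem stmt11 {σ : Signature} [Countable σ.Const] [Countable σ.Pred]
    (Γ Ω : Set (Formula σ))
    (hΓs : ∀ γ ∈ Γ, Formula.Sentence γ) (hΩs : ∀ ω ∈ Ω, Formula.Sentence ω)
    (hcon : PairConsistent NoAx Γ Ω)
    (hfresh : {c : σ.Const |
      (∀ γ ∈ Γ, c ∉ γ.consts) ∧ (∀ ω ∈ Ω, c ∉ ω.consts)}.Infinite) :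
    ∃ Γ' : Set (Formula σ), SaturatedIn NoAx Set.univ Γ' ∧
      Γ ⊆ Γ' ∧ Ω ∩ Γ' = ∅ := by
  classical
  have hcnt : Countable (Formula σ) := formula_countable
  have hne : Nonempty (Formula σ) := ⟨Formula.bot⟩
  obtain ⟨e, he⟩ := exists_surjective_nat (Formula σ)
  let s0 : LState NoAx Γ Ω :=
    { G := Γ, O := Ω, hG := subset_rfl, hO := subset_rfl, con := hcon,
      sent := by rintro φ (h | h); exacts [hΓs φ h, hΩs φ h],
      fresh := hfresh.mono (by
        rintro c ⟨h1, h2⟩ φ (h | h); exacts [h1 φ h, h2 φ h]) }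
  set ch := lchain s0 e with hch
  set Γ' := ⋃ n, (ch n).G with hΓ'
  set Ω' := ⋃ n, (ch n).O with hΩ'
  have hpc : PairConsistent NoAx Γ' Ω' :=
    pc_iUnion (fun h => lchain_G_mono s0 e h) (fun h => lchain_O_mono s0 e h)
      (fun n => (ch n).con)
  have hsentΓ' : ∀ φ ∈ Γ', Formula.Sentence φ := by
    intro φ h
    obtain ⟨_, ⟨n, rfl⟩, hn⟩ := h
    exact (ch n).sent φ (.inl hn)
  have hchsucc : ∀ n, ch (n + 1) = lstep (ch n) (e n) := fun n => rfl
  have hcover : ∀ φ : Formula σ, Formula.Sentence φ → φ ∈ Γ' ∨ φ ∈ Ω' := by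
    intro φ hs
    obtain ⟨n, rfl⟩ := he φ
    rcases lstep_cover (ch n) (e n) hs with h | h
    · exact Or.inl (Set.mem_iUnion.mpr ⟨n + 1, by rw [hchsucc n]; exact h⟩)
    · exact Or.inr (Set.mem_iUnion.mpr ⟨n + 1, by rw [hchsucc n]; exact h⟩)
  have hnotΩ : ∀ φ ∈ Ω', φ ∉ Γ' := fun φ h => pc_disjoint hpc h
  refine ⟨Γ', ⟨?_, ?_, ?_, ?_, ?_⟩, ?_, ?_⟩
  · exact fun φ h => ⟨hsentΓ' φ h, Set.subset_univ _⟩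
  · intro hbot
    exact pc_iff.mp hpc ⟨[], by simp,
      (provesFrom_iff_prvFrom.mp hbot : PrvFrom _ Γ' (disjList []))⟩
  · intro φ hs _ hp
    rcases hcover φ hs with h | h
    · exact h
    · exact absurd (provesFrom_iff_prvFrom.mp hp) fun hp' =>
        pc_iff.mp hpc ⟨[φ], by simpa using h,
          .mp (.ax (Prv.orI1 φ Formula.bot)) hp'⟩
  · intro φ ψ hor
    by_contra hcon'
    push_neg at hcon'
    obtain ⟨h1, h2⟩ := hcon'
    have hfv : φ.fv ∪ ψ.fv = ∅ := hsentΓ' _ hor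
    rw [Set.union_empty_iff] at hfv
    have hφΩ : φ ∈ Ω' := (hcover φ hfv.1).resolve_left h1
    have hψΩ : ψ ∈ Ω' := (hcover ψ hfv.2).resolve_left h2
    refine pc_iff.mp hpc ⟨[φ, ψ], ?_, ?_⟩
    · intro γ hγ
      rcases List.mem_cons.mp hγ with rfl | hγ
      · exact hφΩ
      · rcases List.mem_cons.mp hγ with rfl | hγ
        · exact hψΩ
        · simp at hγ
    · exact .mp (.ax (Prv.mp (Prv.mp (Prv.orE φ ψ (disjList [φ, ψ]))
        (Prv.orI1 φ (ψ.or Formula.bot)))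
        ((Prv.orI1 ψ Formula.bot).comp (Prv.orI2 φ (ψ.or Formula.bot)))))
        (.hyp hor)
  · intro x φ hex
    obtain ⟨n, hn⟩ := he (Formula.ex x φ)
    have hs := hsentΓ' _ hex
    rcases lstep_henkin (ch n) x φ hs with h | ⟨c, h⟩
    · have h' : Formula.ex x φ ∈ Ω' := Set.mem_iUnion.mpr ⟨n + 1, by
        rw [hchsucc n, hn]; exact h⟩
      exact absurd hex (hnotΩ _ h')
    · exact ⟨c, Set.mem_univ c, Set.mem_iUnion.mpr ⟨n + 1, by
        rw [hchsucc n, hn]; exact h⟩⟩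
  · exact fun γ h => Set.mem_iUnion.mpr ⟨0, s0.hG h⟩
  · rw [Set.eq_empty_iff_forall_notMem]
    rintro ω ⟨hω, hγ⟩
    exact hnotΩ ω (Set.mem_iUnion.mpr ⟨0, s0.hO hω⟩) hγ
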